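/- arXiv:2410.15921 — 3 statements merged into one kernel-verified Lean document; each statement's English description precedes it below -/
import Mathlib

section
/- Under the hypotheses of the previous divergence and Rayleigh bounds, if (λ_min(P)/D²)·||∇σ(p_c)|| − M·D > 0, then ∇σ(p_c)ᵀ L_σ > 0, i.e., L_σ = (1/(ND²)) Σ_i σ(p_c + x_i) x_i is an ascending direction at p_c. -/
/-!
Write `g = ∇σ(p_c)`. Since the `x_i` sum to zero, the constant term `σ(p_c)` of the Taylor
expansion drops out of `∑ σ(p_c + x_i) ⟪g, x_i⟫`, which therefore equals
`∑ ⟪g, x_i⟫² + ∑ r_i ⟪g, x_i⟫` with remainders `|r_i| ≤ M D²`. The first sum is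
`N gᵀ P g ≥ N λ_min(P) ‖g‖²` by the Rayleigh bound and the second is at least `-N M D³ ‖g‖`,
so `⟪g, L_σ⟫ ≥ ‖g‖ (λ_min(P) ‖g‖ / D² - M D) > 0`.
-/

open RealInnerProductSpace Matrix Set

section Taylor

variable {E F : Type*} [NormedAddCommGroup E] [NormedSpace ℝ E]
  [NormedAddCommGroup F] [NormedSpace ℝ F] {f : E → F}

theorem norm_fderiv_sub_fderiv_le_of_norm_iteratedFDeriv_two_le {C : ℝ} (hf : ContDiff ℝ 2 f)
    (hC : ∀ a, ‖iteratedFDeriv ℝ 2 f a‖ ≤ C) (a b : E) :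
    ‖fderiv ℝ f a - fderiv ℝ f b‖ ≤ C * ‖a - b‖ := by
  have hdf : Differentiable ℝ (fderiv ℝ f) :=
    (hf.fderiv_right (m := 1) le_rfl).differentiable one_ne_zero
  refine convex_univ.norm_image_sub_le_of_norm_fderiv_le (fun z _ => hdf z) (fun z _ => ?_)
    (mem_univ b) (mem_univ a)
  rw [← norm_iteratedFDeriv_one, norm_iteratedFDeriv_fderiv]
  exact hC z

theorem norm_image_add_sub_sub_fderiv_le {M : ℝ} (hf : ContDiff ℝ 2 f)
    (hM : ∀ a, ‖iteratedFDeriv ℝ 2 f a‖ ≤ 2 * M) (p v : E) :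
    ‖f (p + v) - f p - fderiv ℝ f p v‖ ≤ M * ‖v‖ ^ 2 := by
  have hdf : Differentiable ℝ f := hf.differentiable two_ne_zero
  set g : ℝ → F := fun t => f (p + t • v) - f p - t • fderiv ℝ f p v
  have hg : ∀ t, HasDerivAt g (fderiv ℝ f (p + t • v) v - fderiv ℝ f p v) t := by
    intro t
    have hline : HasDerivAt (fun t : ℝ => p + t • v) v t := by
      simpa using ((hasDerivAt_id t).smul_const v).const_add p
    exact (((hdf _).hasFDerivAt.comp_hasDerivAt t hline).sub_const (f p)).sub
      (by simpa using (hasDerivAt_id t).smul_const (fderiv ℝ f p v))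
  have hB : ∀ t, HasDerivAt (fun t : ℝ => M * t ^ 2 * ‖v‖ ^ 2) (2 * M * t * ‖v‖ ^ 2) t := by
    intro t
    exact (((hasDerivAt_pow 2 t).const_mul M).mul_const (‖v‖ ^ 2)).congr_deriv (by ring)
  have hbound : ∀ t ∈ Ico (0 : ℝ) 1,
      ‖fderiv ℝ f (p + t • v) v - fderiv ℝ f p v‖ ≤ 2 * M * t * ‖v‖ ^ 2 := by
    intro t ht
    calc ‖fderiv ℝ f (p + t • v) v - fderiv ℝ f p v‖
        = ‖(fderiv ℝ f (p + t • v) - fderiv ℝ f p) v‖ := rfl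
      _ ≤ ‖fderiv ℝ f (p + t • v) - fderiv ℝ f p‖ * ‖v‖ := ContinuousLinearMap.le_opNorm _ _
      _ ≤ 2 * M * ‖t • v‖ * ‖v‖ := by
        gcongr
        simpa using norm_fderiv_sub_fderiv_le_of_norm_iteratedFDeriv_two_le hf hM (p + t • v) p
      _ = 2 * M * t * ‖v‖ ^ 2 := by rw [norm_smul, Real.norm_of_nonneg ht.1]; ring
  have := image_norm_le_of_norm_deriv_right_le_deriv_boundary
    (fun t _ => (hg t).continuousAt.continuousWithinAt) (fun t _ => (hg t).hasDerivWithinAt)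
    (by simp [g]) hB hbound (right_mem_Icc.2 zero_le_one)
  simpa [g] using this

end Taylor

theorem abs_image_add_sub_sub_inner_gradient_le {E : Type*} [NormedAddCommGroup E]
    [InnerProductSpace ℝ E] [CompleteSpace E] {σ : E → ℝ} {M : ℝ} (hσ : ContDiff ℝ 2 σ) (hM : ∀ a, ‖iteratedFDeriv ℝ 2 σ a‖ ≤ 2 * M)
    (p v : E) : |σ (p + v) - σ p - ⟪gradient σ p, v⟫| ≤ M * ‖v‖ ^ 2 := by
  simpa [gradient, InnerProductSpace.toDual_symm_apply] using
    norm_image_add_sub_sub_fderiv_le hσ hM p v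

theorem Matrix.IsHermitian.iInf_eigenvalues_mul_norm_sq_le {n : Type*} [Fintype n] [DecidableEq n]
    {A : Matrix n n ℝ} (hA : A.IsHermitian) (v : EuclideanSpace ℝ n) :
    (⨅ i, hA.eigenvalues i) * ‖v‖ ^ 2 ≤ ⟪v, toEuclideanLin A v⟫ := by
  set b := hA.eigenvectorBasis
  have hb : ∀ i, ⟪b i, toEuclideanLin A v⟫ = hA.eigenvalues i * ⟪b i, v⟫ := by
    intro i
    rw [← (isSymmetric_toEuclideanLin_iff.mpr hA) (b i) v]
    simp [b, toLpLin_apply, hA.mulVec_eigenvectorBasis, real_inner_smul_left]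
  calc (⨅ i, hA.eigenvalues i) * ‖v‖ ^ 2
      = ∑ i, (⨅ j, hA.eigenvalues j) * ⟪b i, v⟫ ^ 2 := by
        rw [← b.sum_sq_norm_inner_right, Finset.mul_sum]
        simp only [Real.norm_eq_abs, sq_abs]
    _ ≤ ∑ i, hA.eigenvalues i * ⟪b i, v⟫ ^ 2 := by
        gcongr with i
        exact ciInf_le (Finite.bddBelow_range _) i
    _ = ⟪v, toEuclideanLin A v⟫ := by
        rw [← b.sum_inner_mul_inner]
        refine Finset.sum_congr rfl fun i _ => ?_
        rw [hb, real_inner_comm v]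
        ring

theorem dotProduct_sum_vecMulVec_mulVec {R ι n : Type*} [CommRing R] [Fintype ι] [Fintype n]
    (u : ι → n → R) (v : n → R) :
    v ⬝ᵥ (∑ i, vecMulVec (u i) (u i)) *ᵥ v = ∑ i, (u i ⬝ᵥ v) ^ 2 := by
  simp [Matrix.sum_mulVec, vecMulVec_mulVec, sum_dotProduct, sq, dotProduct_comm v]

theorem iInf_eigenvalues_mul_norm_sq_le_smul_sum_sq_inner {ι n : Type*} [Fintype ι] [Fintype n]
    [DecidableEq n] (x : ι → EuclideanSpace ℝ n) {c : ℝ} {P : Matrix n n ℝ}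
    (hP : P = c • ∑ i, vecMulVec (x i) (x i)) (hPh : P.IsHermitian) (g : EuclideanSpace ℝ n) :
    (⨅ i, hPh.eigenvalues i) * ‖g‖ ^ 2 ≤ c * ∑ i, ⟪g, x i⟫ ^ 2 := by
  refine (hPh.iInf_eigenvalues_mul_norm_sq_le g).trans_eq ?_
  rw [EuclideanSpace.inner_eq_star_dotProduct, toLpLin_apply, WithLp.ofLp_toLp, star_trivial,
    hP, smul_mulVec, smul_dotProduct, dotProduct_comm, dotProduct_sum_vecMulVec_mulVec, smul_eq_mul]
  rfl

theorem sum_sq_inner_sub_le_sum_mul_inner {E ι : Type*} [NormedAddCommGroup E]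
    [InnerProductSpace ℝ E] [Fintype ι] {g : E} {x : ι → E} (hsum : ∑ i, x i = 0)
    {D M s₀ : ℝ} {s : ι → ℝ} (hM : 0 ≤ M) (hD : ∀ i, ‖x i‖ ≤ D)
    (hs : ∀ i, |s i - s₀ - ⟪g, x i⟫| ≤ M * ‖x i‖ ^ 2) :
    ∑ i, ⟪g, x i⟫ ^ 2 - Fintype.card ι * (M * D ^ 3 * ‖g‖) ≤ ∑ i, s i * ⟪g, x i⟫ := by
  have hlin : ∑ i, ⟪g, x i⟫ = 0 := by rw [← inner_sum, hsum, inner_zero_right]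
  have hrem : ∀ i, -(M * D ^ 3 * ‖g‖) ≤ (s i - s₀ - ⟪g, x i⟫) * ⟪g, x i⟫ := by
    intro i
    have hx : ‖x i‖ ^ 2 ≤ D ^ 2 := pow_le_pow_left₀ (norm_nonneg _) (hD i) 2
    have hgx : |⟪g, x i⟫| ≤ ‖g‖ * D :=
      (abs_real_inner_le_norm g (x i)).trans (by gcongr; exact hD i)
    refine neg_le_of_abs_le ?_
    calc |(s i - s₀ - ⟪g, x i⟫) * ⟪g, x i⟫| ≤ (M * D ^ 2) * (‖g‖ * D) := by
          rw [abs_mul]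
          exact mul_le_mul ((hs i).trans (by gcongr)) hgx (abs_nonneg _) (by positivity)
      _ = M * D ^ 3 * ‖g‖ := by ring
  calc ∑ i, ⟪g, x i⟫ ^ 2 - Fintype.card ι * (M * D ^ 3 * ‖g‖)
      = ∑ i, (⟪g, x i⟫ ^ 2 + -(M * D ^ 3 * ‖g‖)) := by
        rw [Finset.sum_add_distrib, Finset.sum_const, Finset.card_univ, nsmul_eq_mul]
        ring
    _ ≤ ∑ i, (⟪g, x i⟫ ^ 2 + (s i - s₀ - ⟪g, x i⟫) * ⟪g, x i⟫) := by gcongr with i; exact hrem i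
    _ = ∑ i, s i * ⟪g, x i⟫ - s₀ * ∑ i, ⟪g, x i⟫ := by
        rw [Finset.mul_sum, ← Finset.sum_sub_distrib]
        exact Finset.sum_congr rfl fun i _ => by ring
    _ = ∑ i, s i * ⟪g, x i⟫ := by rw [hlin, mul_zero, sub_zero]

theorem Lsigma_ascending_of_hS_pos_general
    (m N : ℕ) (hm : 0 < m) (σ : EuclideanSpace ℝ (Fin m) → ℝ) (M : ℝ)
    (hσ : ContDiff ℝ 2 σ)
    (hHess : ∀ a : EuclideanSpace ℝ (Fin m), ‖iteratedFDeriv ℝ 2 σ a‖ ≤ 2 * M)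
    (pc : EuclideanSpace ℝ (Fin m))
    (x : Fin N → EuclideanSpace ℝ (Fin m))
    (hsum : ∑ i, x i = 0)
    (D : ℝ) (hD : IsGreatest (Set.range fun i => ‖x i‖) D) (hDpos : 0 < D)
    (P : Matrix (Fin m) (Fin m) ℝ)
    (hP : P = ((N : ℝ)⁻¹) • ∑ i, Matrix.vecMulVec (fun j => x i j) (fun j => x i j))
    (hPh : P.IsHermitian)
    (Lσ : EuclideanSpace ℝ (Fin m))
    (hLσ : Lσ = (1 / (N * D ^ 2)) • ∑ i, σ (pc + x i) • x i)
    (hcond :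
      haveI : Nonempty (Fin m) := Fin.pos_iff_nonempty.mp hm
      0 < (⨅ i, hPh.eigenvalues i) / D ^ 2 * ‖gradient σ pc‖ - M * D) :
    0 < ⟪gradient σ pc, Lσ⟫ := by
  set g := gradient σ pc
  have hN : (0 : ℝ) < N := by
    obtain ⟨⟨i, hi⟩, -⟩ := hD.1
    exact Nat.cast_pos.2 (Nat.zero_lt_of_lt hi)
  have hM : 0 ≤ M := by linarith [(norm_nonneg _).trans (hHess pc)]
  have hg : 0 < ‖g‖ := (norm_nonneg g).lt_of_ne fun h => by
    rw [← h] at hcond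
    nlinarith [mul_nonneg hM hDpos.le]
  have hrayleigh : N * ((⨅ i, hPh.eigenvalues i) * ‖g‖ ^ 2) ≤ ∑ i, ⟪g, x i⟫ ^ 2 := by
    have := mul_le_mul_of_nonneg_left
      (iInf_eigenvalues_mul_norm_sq_le_smul_sum_sq_inner x hP hPh g) hN.le
    rwa [mul_inv_cancel_left₀ hN.ne'] at this
  have htaylor := sum_sq_inner_sub_le_sum_mul_inner hsum hM (fun i => hD.2 ⟨i, rfl⟩)
    (fun i => abs_image_add_sub_sub_inner_gradient_le hσ hHess pc (x i))
  rw [Fintype.card_fin] at htaylor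
  calc 0 < ‖g‖ * ((⨅ i, hPh.eigenvalues i) / D ^ 2 * ‖g‖ - M * D) := mul_pos hg hcond
    _ = 1 / (N * D ^ 2) *
          (N * ((⨅ i, hPh.eigenvalues i) * ‖g‖ ^ 2) - N * (M * D ^ 3 * ‖g‖)) := by
        field_simp
    _ ≤ 1 / (N * D ^ 2) * ∑ i, σ (pc + x i) * ⟪g, x i⟫ := by
        gcongr
        linarith
    _ = ⟪g, Lσ⟫ := by simp only [hLσ, real_inner_smul_right, inner_sum]

/-- Proposition 1: if `(λ_min(P)/D²)·‖∇σ(p_c)‖ − M·D > 0` then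
`∇σ(p_c)ᵀ L_σ > 0`, i.e. `L_σ` is an ascending direction at `p_c`. -/
theorem Lsigma_ascending_of_hS_pos
    (m N : ℕ) (hm : 0 < m) (σ : EuclideanSpace ℝ (Fin m) → ℝ) (M : ℝ)
    (hσ : ContDiff ℝ 2 σ)
    (hHess : ∀ a : EuclideanSpace ℝ (Fin m), ‖iteratedFDeriv ℝ 2 σ a‖ ≤ 2 * M)
    (pc : EuclideanSpace ℝ (Fin m))
    (x : Fin N → EuclideanSpace ℝ (Fin m))
    (hsum : ∑ i, x i = 0)
    (hspan : Submodule.span ℝ (Set.range x) = ⊤)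
    (D : ℝ) (hD : IsGreatest (Set.range fun i => ‖x i‖) D) (hDpos : 0 < D)
    (P : Matrix (Fin m) (Fin m) ℝ)
    (hP : P = ((N : ℝ)⁻¹) • ∑ i, Matrix.vecMulVec (fun j => x i j) (fun j => x i j))
    (hPh : P.IsHermitian)
    (Lσ : EuclideanSpace ℝ (Fin m))
    (hLσ : Lσ = (1 / (N * D ^ 2)) • ∑ i, σ (pc + x i) • x i)
    (hcond :
      haveI : Nonempty (Fin m) := Fin.pos_iff_nonempty.mp hm
      0 < (⨅ i, hPh.eigenvalues i) / D ^ 2 * ‖gradient σ pc‖ - M * D) :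
    0 < ⟪gradient σ pc, Lσ⟫ :=
  Lsigma_ascending_of_hS_pos_general m N hm σ M hσ hHess pc x hsum D hD hDpos P hP hPh Lσ hLσ hcond
end

section
/- Consider the linear ODE on R^{mN}: d/dt x̂(t) = −L̄ x̂(t) + L̄ x, where L̄ = L ⊗ I_m and L is the Laplacian of a connected undirected graph on N nodes, and x ∈ R^{mN} has zero average (Σ_i x_i = 0). If Σ_i x̂_i(0) = 0, then x̂(t) → x exponentially fast as t → ∞. -/
/-!
Each column `e = x̂_j - x_j` of the error solves `ė = -L e`. Since `L` is symmetric with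
`L 1 = 0`, the sum `⟪1, e⟫` is conserved, so `e` stays in the orthogonal complement of the
constants. There `L` is coercive, `⟪v, L v⟫ ≥ c ‖v‖²` with `c > 0` (its minimum on the compact
unit sphere of that subspace, positive because the kernel of `L` is the constants), so
`d/dt ‖e‖² ≤ -2c ‖e‖²` and Grönwall gives `‖e(t)‖ ≤ ‖e(0)‖ e^{-ct}`.
-/

open Matrix Real
open scoped RealInnerProductSpace

section InnerProductSpace

variable {E : Type*} [NormedAddCommGroup E] [InnerProductSpace ℝ E]

theorem exists_pos_mul_norm_sq_le_inner_of_pos [FiniteDimensional ℝ E] (T : E →L[ℝ] E)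
    (W : Submodule ℝ E) (hT : ∀ v ∈ W, v ≠ 0 → 0 < ⟪v, T v⟫) :
    ∃ c > 0, ∀ v ∈ W, c * ‖v‖ ^ 2 ≤ ⟪v, T v⟫ := by
  have hS : IsCompact ((W : Set E) ∩ Metric.sphere 0 1) :=
    (isCompact_sphere 0 1).inter_left W.closed_of_finiteDimensional
  obtain ⟨c, hc, hcS⟩ := hS.exists_forall_le'
    (by fun_prop : Continuous fun v => ⟪v, T v⟫).continuousOn
    fun u hu => hT u hu.1 (Metric.ne_of_mem_sphere hu.2 one_ne_zero)
  refine ⟨c, hc, fun v hv => ?_⟩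
  rcases eq_or_ne v 0 with rfl | hv0
  · simp
  have hu : ‖v‖⁻¹ • v ∈ (W : Set E) ∩ Metric.sphere 0 1 :=
    ⟨W.smul_mem _ hv, by simp [norm_smul, hv0]⟩
  have hcu := hcS _ hu
  rw [map_smul, inner_smul_left, inner_smul_right, ← mul_assoc, conj_trivial] at hcu
  have hpos : 0 < ‖v‖ := norm_pos_iff.mpr hv0
  calc c * ‖v‖ ^ 2 ≤ ‖v‖⁻¹ * ‖v‖⁻¹ * ⟪v, T v⟫ * ‖v‖ ^ 2 := by gcongr
    _ = ⟪v, T v⟫ := by field_simp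

theorem inner_eq_of_hasDerivAt_of_inner_deriv_eq_zero {e e' : ℝ → E} (u : E)
    (he : ∀ t, HasDerivAt e (e' t) t) (hu : ∀ t, ⟪u, e' t⟫ = 0) (t : ℝ) :
    ⟪u, e t⟫ = ⟪u, e 0⟫ := by
  have hd (s : ℝ) : HasDerivAt (fun s => ⟪u, e s⟫) 0 s := by
    simpa [hu s] using (hasDerivAt_const s u).inner ℝ (he s)
  exact is_const_of_deriv_eq_zero (fun s => (hd s).differentiableAt) (fun s => (hd s).deriv) t 0

theorem norm_le_mul_exp_of_inner_deriv_le {e e' : ℝ → E} {c : ℝ}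
    (he : ∀ t, HasDerivAt e (e' t) t) (hdiss : ∀ t, ⟪e t, e' t⟫ ≤ -c * ‖e t‖ ^ 2)
    {t : ℝ} (ht : 0 ≤ t) : ‖e t‖ ≤ ‖e 0‖ * exp (-c * t) := by
  have hsq (s : ℝ) := (he s).norm_sq
  have hgron := le_gronwallBound_of_liminf_deriv_right_le (δ := ‖e 0‖ ^ 2) (K := -2 * c)
    (ε := 0) (b := t) (fun s _ => (hsq s).continuousAt.continuousWithinAt)
    (fun s _ _ hr => (hsq s).hasDerivWithinAt.liminf_right_slope_le hr) le_rfl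
    (fun s _ => by linarith [hdiss s]) t ⟨ht, le_rfl⟩
  rw [gronwallBound_ε0, sub_zero] at hgron
  refine le_of_sq_le_sq ?_ (by positivity)
  calc ‖e t‖ ^ 2 ≤ ‖e 0‖ ^ 2 * exp (-2 * c * t) := hgron
    _ = (‖e 0‖ * exp (-c * t)) ^ 2 := by rw [mul_pow, ← exp_nat_mul]; ring_nf

end InnerProductSpace

theorem EuclideanSpace.inner_toLp_one {n : Type*} [Fintype n] (v : EuclideanSpace ℝ n) :
    ⟪WithLp.toLp 2 (fun _ => 1), v⟫ = ∑ i, v i := by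
  simp only [EuclideanSpace.inner_eq_star_dotProduct, star_trivial]
  exact dotProduct_one _

namespace Matrix

variable {n : Type*} [Fintype n] {L : Matrix n n ℝ}

theorem IsHermitian.inner_toLp_one_toEuclideanCLM [DecidableEq n] (hL : L.IsHermitian)
    (hL1 : L *ᵥ (fun _ => 1) = 0) (v : EuclideanSpace ℝ n) :
    ⟪WithLp.toLp 2 (fun _ => 1), toEuclideanCLM (𝕜 := ℝ) L v⟫ = 0 :=
  calc _ = ⟪toEuclideanCLM (𝕜 := ℝ) L (WithLp.toLp 2 fun _ => 1), v⟫ :=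
        (isSymmetric_toEuclideanLin_iff.mpr hL _ v).symm
    _ = 0 := by simp [hL1]

theorem PosSemidef.dotProduct_mulVec_pos_of_sum_eq_zero (hL : L.PosSemidef)
    (hker : ∀ v : n → ℝ, L *ᵥ v = 0 → ∃ c : ℝ, v = fun _ => c)
    {v : n → ℝ} (hv : ∑ i, v i = 0) (hv0 : v ≠ 0) : 0 < v ⬝ᵥ L *ᵥ v := by
  refine (hL.dotProduct_mulVec_nonneg v).lt_of_ne fun h => hv0 ?_
  obtain ⟨c, rfl⟩ := hker _ ((hL.dotProduct_mulVec_zero_iff _).mp h.symm)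
  -- a constant vector of zero sum is orthogonal to itself
  refine dotProduct_self_eq_zero.mp ?_
  simp only [dotProduct, ← Finset.sum_mul, hv, zero_mul]

theorem PosSemidef.exists_norm_le_exp_of_hasDerivAt_neg_toEuclideanCLM [DecidableEq n]
    (hL : L.PosSemidef) (hL1 : L *ᵥ (fun _ => 1) = 0)
    (hker : ∀ v : n → ℝ, L *ᵥ v = 0 → ∃ c : ℝ, v = fun _ => c) :
    ∃ c > 0, ∀ e : ℝ → EuclideanSpace ℝ n,
      (∀ t, HasDerivAt e (-toEuclideanCLM (𝕜 := ℝ) L (e t)) t) → ∑ i, e 0 i = 0 →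
      ∀ t, 0 ≤ t → ‖e t‖ ≤ ‖e 0‖ * exp (-c * t) := by
  set one : EuclideanSpace ℝ n := WithLp.toLp 2 fun _ => 1
  have mem_W (v : EuclideanSpace ℝ n) : v ∈ (ℝ ∙ one)ᗮ ↔ ∑ i, v i = 0 := by
    rw [Submodule.mem_orthogonal_singleton_iff_inner_right, EuclideanSpace.inner_toLp_one]
  obtain ⟨c, hc, hcoer⟩ :=
    exists_pos_mul_norm_sq_le_inner_of_pos (toEuclideanCLM (𝕜 := ℝ) L) (ℝ ∙ one)ᗮ
      fun v hv hv0 => by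
        rw [inner_toEuclideanCLM]
        exact hL.dotProduct_mulVec_pos_of_sum_eq_zero hker ((mem_W v).mp hv) (by simpa using hv0)
  refine ⟨c, hc, fun e he he0 t ht => norm_le_mul_exp_of_inner_deriv_le he (fun s => ?_) ht⟩
  have hconserved : ⟪one, e s⟫ = ⟪one, e 0⟫ :=
    inner_eq_of_hasDerivAt_of_inner_deriv_eq_zero one he (fun s => by
      rw [inner_neg_right, hL.isHermitian.inner_toLp_one_toEuclideanCLM hL1, neg_zero]) s
  have hs : e s ∈ (ℝ ∙ one)ᗮ := by
    rw [mem_W, ← EuclideanSpace.inner_toLp_one, hconserved, EuclideanSpace.inner_toLp_one, he0]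
  rw [inner_neg_right]
  linarith [hcoer _ hs]

end Matrix

theorem centroid_estimator_exponential_convergence_general
    (m N : ℕ) (L : Matrix (Fin N) (Fin N) ℝ)
    (hpsd : L.PosSemidef)
    (hL1 : L.mulVec (fun _ => 1) = 0)
    (hker : ∀ v : Fin N → ℝ, L.mulVec v = 0 → ∃ c : ℝ, v = fun _ => c)
    (x : Fin N → Fin m → ℝ) (hx : ∑ i, x i = 0)
    (xhat : ℝ → Fin N → Fin m → ℝ)
    (hODE : ∀ t, HasDerivAt xhat
      (fun i j => L.mulVec (fun k => x k j - xhat t k j) i) t)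
    (h0 : ∑ i, xhat 0 i = 0) :
    ∃ C > 0, ∃ lam > 0, ∀ t ≥ 0, ‖xhat t - x‖ ≤ C * Real.exp (-lam * t) := by
  obtain ⟨c, hc, hdecay⟩ := hpsd.exists_norm_le_exp_of_hasDerivAt_neg_toEuclideanCLM hL1 hker
  let e (j : Fin m) (t : ℝ) : EuclideanSpace ℝ (Fin N) :=
    WithLp.toLp 2 fun i => xhat t i j - x i j
  have he (j : Fin m) (t : ℝ) : HasDerivAt (e j) (-toEuclideanCLM (𝕜 := ℝ) L (e j t)) t := by
    have hcol := (hasDerivAt_pi.mpr fun i =>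
      hasDerivAt_pi.mp (hasDerivAt_pi.mp (hODE t) i) j).sub_const fun i => x i j
    refine ((PiLp.continuousLinearEquiv 2 ℝ fun _ : Fin N => ℝ).symm.hasFDerivAt.comp_hasDerivAt
      t hcol).congr_deriv ?_
    rw [show (fun k => x k j - xhat t k j) = -fun k => xhat t k j - x k j by ext; simp,
      mulVec_neg]
    rfl
  have he0 (j : Fin m) : ∑ i, e j 0 i = 0 := by
    simp [e, Finset.sum_sub_distrib, ← Finset.sum_apply, h0, hx]
  refine ⟨∑ j, ‖e j 0‖ + 1, by positivity, c, hc, fun t ht => ?_⟩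
  refine (pi_norm_le_iff_of_nonneg (by positivity)).mpr fun i =>
    (pi_norm_le_iff_of_nonneg (by positivity)).mpr fun j => ?_
  calc ‖(xhat t - x) i j‖ = ‖e j t i‖ := rfl
    _ ≤ ‖e j t‖ := PiLp.norm_apply_le _ _
    _ ≤ ‖e j 0‖ * exp (-c * t) := hdecay (e j) (he j) (he0 j) t ht
    _ ≤ (∑ j, ‖e j 0‖ + 1) * exp (-c * t) := by
      gcongr
      linarith [Finset.single_le_sum (fun j _ => norm_nonneg (e j 0)) (Finset.mem_univ j)]

/-- Proposition 5 (distributed centroid estimation): for the ODE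
`d/dt x̂ = −L̄ x̂ + L̄ x` with `L` the Laplacian of a connected undirected graph
(symmetric, positive semidefinite, kernel spanned by the all-ones vector), a target `x`
of zero average, and initial estimates of zero average, `x̂(t) → x` exponentially fast. -/
theorem centroid_estimator_exponential_convergence
    (m N : ℕ) (L : Matrix (Fin N) (Fin N) ℝ)
    (hsym : Lᵀ = L) (hpsd : L.PosSemidef)
    (hL1 : L.mulVec (fun _ => 1) = 0)
    (hker : ∀ v : Fin N → ℝ, L.mulVec v = 0 → ∃ c : ℝ, v = fun _ => c)
    (x : Fin N → Fin m → ℝ) (hx : ∑ i, x i = 0)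
    (xhat : ℝ → Fin N → Fin m → ℝ)
    (hODE : ∀ t, HasDerivAt xhat
      (fun i j => L.mulVec (fun k => x k j - xhat t k j) i) t)
    (h0 : ∑ i, xhat 0 i = 0) :
    ∃ C > 0, ∃ lam > 0, ∀ t ≥ 0, ‖xhat t - x‖ ≤ C * Real.exp (-lam * t) :=
  centroid_estimator_exponential_convergence_general m N L hpsd hL1 hker x hx xhat hODE h0
end

section
/- Let δ_ij(t) = α_i(t) − α_j(t) satisfy δ̇_ij = −κ δ_ij with κ > 0 and δ_ij(0) ∈ (−2π, 2π). Let p_i, p_j : R≥0 → R² satisfy ṗ_i = (cos α_i, sin α_i), ṗ_j = (cos α_j, sin α_j). Then ||(p_i(t) − p_j(t)) − (p_i(0) − p_j(0))|| ≤ 2π/κ for all t ≥ 0. -/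
/-!
The heading difference solves a linear ODE, so it equals `δ₀ e^{-κt}`. Since the chord between
two points of the unit circle is at most the arc, the relative velocity is bounded by
`|δ₀| e^{-κt}`, whose integral over `[0, ∞)` is `|δ₀|/κ < 2π/κ`.
-/

open Real Set

theorem eq_mul_exp_of_hasDerivAt_neg_mul {f : ℝ → ℝ} {κ : ℝ}
    (hf : ∀ t, HasDerivAt f (-κ * f t) t) (t : ℝ) : f t = f 0 * exp (-κ * t) := by
  have hderiv : ∀ s, HasDerivAt (fun s => f s * exp (κ * s)) 0 s := fun s =>
    ((hf s).mul ((hasDerivAt_id' s).const_mul κ).exp).congr_deriv (by ring)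
  have hconst : f t * exp (κ * t) = f 0 := by
    simpa using is_const_of_deriv_eq_zero (fun s => (hderiv s).differentiableAt)
      (fun s => (hderiv s).deriv) t 0
  rw [← hconst, mul_assoc, ← exp_add]
  simp

noncomputable def headingVec (a : ℝ) : EuclideanSpace ℝ (Fin 2) := WithLp.toLp 2 ![cos a, sin a]

theorem norm_headingVec_sub_le (a b : ℝ) : ‖headingVec a - headingVec b‖ ≤ |a - b| := by
  have hsq : ‖headingVec a - headingVec b‖ ^ 2 = 2 - 2 * cos (a - b) := by
    rw [EuclideanSpace.norm_sq_eq, Fin.sum_univ_two, cos_sub]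
    simp only [headingVec, PiLp.sub_apply, Matrix.cons_val_zero,
      Matrix.cons_val_one, norm_eq_abs, sq_abs]
    nlinarith [sin_sq_add_cos_sq a, sin_sq_add_cos_sq b]
  have hcos := one_sub_sq_div_two_le_cos (x := a - b)
  rw [← abs_norm]
  exact sq_le_sq.mp (by rw [hsq]; nlinarith)

theorem norm_sub_le_of_norm_deriv_le_exp_decay {E : Type*} [NormedAddCommGroup E]
    [NormedSpace ℝ E] {f f' : ℝ → E} {C κ : ℝ} (hκ : 0 < κ)
    (hf : ∀ t, HasDerivAt f (f' t) t) (hf' : ∀ t ≥ 0, ‖f' t‖ ≤ C * exp (-κ * t))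
    {t : ℝ} (ht : 0 ≤ t) : ‖f t - f 0‖ ≤ C / κ := by
  have hC : 0 ≤ C := by simpa using (norm_nonneg _).trans (hf' 0 le_rfl)
  -- `B` is the primitive of the bound `C e^{-κs}` vanishing at `0`.
  set B : ℝ → ℝ := fun s => C / κ * (1 - exp (-κ * s))
  have hB : ∀ s, HasDerivAt B (C * exp (-κ * s)) s := fun s =>
    ((((hasDerivAt_id' s).const_mul (-κ)).exp.const_sub 1).const_mul (C / κ)).congr_deriv
      (by field_simp)
  have hfB : ‖f t - f 0‖ ≤ B t :=
    image_norm_le_of_norm_deriv_right_le_deriv_boundary (f := fun s => f s - f 0)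
      (fun s _ => ((hf s).sub_const _).continuousAt.continuousWithinAt)
      (fun s _ => ((hf s).sub_const _).hasDerivWithinAt) (by simp [B]) hB
      (fun s hs => hf' s hs.1) ⟨ht, le_rfl⟩
  calc ‖f t - f 0‖ ≤ B t := hfB
    _ ≤ C / κ := mul_le_of_le_one_right (by positivity) (by linarith [exp_pos (-κ * t)])

/-- Core estimate of Lemma 6: unit-speed unicycles whose heading difference
`δ_ij = α_i − α_j` satisfies `δ̇_ij = −κ δ_ij` with `κ > 0` and `δ_ij(0) ∈ (−2π, 2π)`
have relative displacement deformation bounded by `2π/κ`. -/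
theorem unicycle_pair_displacement_bound
    (κ : ℝ) (hκ : 0 < κ)
    (αi αj : ℝ → ℝ)
    (hδ : ∀ t, HasDerivAt (fun s => αi s - αj s) (-κ * (αi t - αj t)) t)
    (hδ0 : |αi 0 - αj 0| < 2 * Real.pi)
    (pi pj : ℝ → EuclideanSpace ℝ (Fin 2))
    (hpi : ∀ t, HasDerivAt pi (WithLp.toLp 2 ![Real.cos (αi t), Real.sin (αi t)]) t)
    (hpj : ∀ t, HasDerivAt pj (WithLp.toLp 2 ![Real.cos (αj t), Real.sin (αj t)]) t) :
    ∀ t ≥ 0, ‖(pi t - pj t) - (pi 0 - pj 0)‖ ≤ 2 * Real.pi / κ := by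
  intro t ht
  have hvel : ∀ s ≥ 0, ‖headingVec (αi s) - headingVec (αj s)‖ ≤ |αi 0 - αj 0| * exp (-κ * s) :=
    fun s _ => calc
      ‖headingVec (αi s) - headingVec (αj s)‖ ≤ |αi s - αj s| := norm_headingVec_sub_le _ _
      _ = |αi 0 - αj 0| * exp (-κ * s) := by
        rw [eq_mul_exp_of_hasDerivAt_neg_mul hδ s, abs_mul, abs_of_pos (exp_pos _)]
  calc ‖(pi t - pj t) - (pi 0 - pj 0)‖ ≤ |αi 0 - αj 0| / κ :=
        norm_sub_le_of_norm_deriv_le_exp_decay hκ (fun s => (hpi s).sub (hpj s)) hvel ht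
    _ ≤ 2 * π / κ := by gcongr
end
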